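/- Let f be a non-zero vector of a metric vector space (V,Q). Then the following are equivalent: (a) the group {δ_{a*,f} : a* ∈ V*, ⟨a*,f⟩ = 0} is contained in O'(V,Q); (b) one of the following holds: (i) Q(f) = 0 and V^⊥ = F·f, or (ii) dim V = 1, or (iii) dim V = 2, Q(f) ≠ 0, dim V^⊥ = 0, and |F| = 2. -/

import Mathlib

/-! Setting: a field `F`, a finite-dimensional `F`-vector space `V`, a quadratic form
`Q : V → F` with polar form `B = QuadraticMap.polar Q` (the bilinear map `Q.polarBilin`),
induced map `D = Q.polarBilin : V →ₗ[F] Module.Dual F V`, and radical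
`V^⊥ = LinearMap.ker Q.polarBilin`. -/

variable {F V : Type*} [Field F] [AddCommGroup V] [Module F V] [FiniteDimensional F V]

/-- The map `δ_{c*,f} : x ↦ x + ⟨c*,x⟩ • f`. -/
def deltaMap (c : Module.Dual F V) (f : V) : V →ₗ[F] V :=
  LinearMap.id + c.smulRight f

/-- The orthogonal group `O(V,Q)`, as a set of linear endomorphisms. -/
def orthSet (Q : QuadraticForm F V) : Set (V →ₗ[F] V) :=
  {φ | Function.Bijective φ ∧ ∀ x, Q (φ x) = Q x}

/-- The weak orthogonal group `O'(V,Q)`: isometries fixing the radical elementwise. -/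
def wOrthSet (Q : QuadraticForm F V) : Set (V →ₗ[F] V) :=
  {φ | Function.Bijective φ ∧ (∀ x, Q (φ x) = Q x) ∧
    ∀ x ∈ LinearMap.ker Q.polarBilin, φ x = x}

/-- The group `Δ(V,f) = {δ_{a*,f} : a* ∈ V*, ⟨a*,f⟩ ≠ -1}`. -/
def deltaSet (f : V) : Set (V →ₗ[F] V) :=
  {φ | ∃ a : Module.Dual F V, a f ≠ -1 ∧ φ = deltaMap a f}

/-- The `Q`-reflection `ξ_r : x ↦ x - Q(r)⁻¹ • B(r,x) • r` in the direction of `r`. -/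
noncomputable def xiMap (Q : QuadraticForm F V) (r : V) : V →ₗ[F] V :=
  LinearMap.id - (Q r)⁻¹ • (Q.polarBilin r).smulRight r

/-! Since `Q (x + t • f) = Q x + t (t Q f + B(f,x))` and a linear form vanishing at `f` can take
any value at a vector outside `F f`, the inclusion holds iff `V^⊥ ⊆ F f` and
`t (t Q f + B(f,x)) = 0` for all `t ∈ F` and all `x ∉ F f`. Unless `F f = V`, taking `t = 1` gives
`B(f,x) = -Q f` off `F f`. If `Q f = 0` this makes `f` radical. If `Q f ≠ 0` it forces every
`t ∈ F` to be `0` or `1`, so `F = 𝔽₂`; then `B(f,f) = 2 Q f = 0`, so the hyperplane `ker B(f,·)`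
is exactly `F f` and `dim V = 2`. -/

open Module QuadraticMap

section

variable {K W : Type*} [Field K] [AddCommGroup W] [Module K W]

lemma Cardinal.mk_eq_two_iff_forall_eq_zero_or_eq_one :
    Cardinal.mk K = 2 ↔ ∀ t : K, t = 0 ∨ t = 1 := by
  rw [Cardinal.mk_eq_two_iff' 0]
  constructor
  · rintro ⟨u, -, hu⟩ t
    refine or_iff_not_imp_left.mpr fun ht => ?_
    rw [hu t ht, hu 1 one_ne_zero]
  · exact fun h => ⟨1, one_ne_zero, fun t ht => (h t).resolve_left ht⟩

lemma two_eq_zero_of_forall_eq_zero_or_eq_one (h : ∀ t : K, t = 0 ∨ t = 1) : (2 : K) = 0 :=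
  (h 2).resolve_right fun h2 => one_ne_zero (by linear_combination h2)

lemma Module.Dual.exists_apply_eq_zero_apply_eq_one {f x : W}
    (hx : x ∉ Submodule.span K {f}) : ∃ a : Dual K W, a f = 0 ∧ a x = 1 := by
  obtain ⟨a, hax, hmap⟩ := Submodule.exists_dual_map_eq_bot_of_notMem hx inferInstance
  rw [Submodule.map_span, Set.image_singleton, Submodule.span_singleton_eq_bot] at hmap
  exact ⟨(a x)⁻¹ • a, by simp [hmap], by simp [hax]⟩

lemma Module.Dual.ker_eq_span_singleton_iff_finrank_eq_two [FiniteDimensional K W]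
    {g : Dual K W} {f : W} (hg : g ≠ 0) (hf : f ≠ 0) (hgf : g f = 0) :
    LinearMap.ker g = Submodule.span K {f} ↔ finrank K W = 2 := by
  have hker := g.finrank_ker_add_one_of_ne_zero hg
  have hspan := finrank_span_singleton (K := K) hf
  constructor
  · intro h
    rw [h, hspan] at hker
    omega
  · intro h
    refine (Submodule.eq_of_le_of_finrank_eq ?_ (by omega)).symm
    rwa [Submodule.span_singleton_le_iff_mem]

lemma QuadraticMap.map_add_smul (Q : QuadraticForm K W) (x f : W) (c : K) :
    Q (x + c • f) = Q x + c * (c * Q f + polar Q f x) := by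
  rw [QuadraticMap.map_add Q, QuadraticMap.map_smul, polar_smul_right, polar_comm, smul_eq_mul,
    smul_eq_mul]
  ring

lemma QuadraticMap.polar_self_eq_zero_of_two_eq_zero (Q : QuadraticForm K W) (h2 : (2 : K) = 0)
    (f : W) : polar Q f f = 0 := by
  rw [polar_self, two_nsmul, ← two_mul, h2, zero_mul]

lemma deltaMap_apply (c : Dual K W) (f x : W) : deltaMap c f x = x + c x • f := rfl

lemma deltaMap_bijective {a : Dual K W} {f : W} (ha : a f = 0) :
    Function.Bijective (deltaMap a f) := by
  rw [Function.bijective_iff_has_inverse]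
  refine ⟨deltaMap (-a) f, fun x => ?_, fun x => ?_⟩ <;> simp [deltaMap_apply, ha]

lemma deltaMap_mem_wOrthSet_iff (Q : QuadraticForm K W) {a : Dual K W} {f : W} (hf : f ≠ 0)
    (ha : a f = 0) :
    deltaMap a f ∈ wOrthSet Q ↔ (∀ x, a x * (a x * Q f + polar Q f x) = 0) ∧
      LinearMap.ker Q.polarBilin ≤ LinearMap.ker a := by
  simp only [wOrthSet, Set.mem_ofPred_eq, deltaMap_apply, map_add_smul, add_eq_left,
    smul_eq_zero, hf, or_false, deltaMap_bijective ha, true_and]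
  rfl

lemma forall_deltaMap_mem_wOrthSet_iff (Q : QuadraticForm K W) {f : W} (hf : f ≠ 0) :
    (∀ a : Dual K W, a f = 0 → deltaMap a f ∈ wOrthSet Q) ↔
      (∀ x ∉ Submodule.span K {f}, ∀ t : K, t * (t * Q f + polar Q f x) = 0) ∧
        LinearMap.ker Q.polarBilin ≤ Submodule.span K {f} := by
  simp +contextual only [deltaMap_mem_wOrthSet_iff Q hf]
  constructor
  · intro H
    refine ⟨fun x hx t => ?_, fun v hv => by_contra fun hvf => ?_⟩
    · obtain ⟨a, haf, hax⟩ := Dual.exists_apply_eq_zero_apply_eq_one hx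
      simpa [hax] using (H (t • a) (by simp [haf])).1 x
    · obtain ⟨a, haf, hav⟩ := Dual.exists_apply_eq_zero_apply_eq_one hvf
      exact one_ne_zero (hav ▸ LinearMap.mem_ker.mp ((H a haf).2 hv))
  · rintro ⟨hpolar, hker⟩ a haf
    refine ⟨fun x => ?_, hker.trans ?_⟩
    · by_cases hx : x ∈ Submodule.span K {f}
      · obtain ⟨c, rfl⟩ := Submodule.mem_span_singleton.mp hx
        simp [haf]
      · exact hpolar x hx (a x)
    · rwa [Submodule.span_singleton_le_iff_mem]

lemma QuadraticMap.mem_ker_polarBilin_iff (Q : QuadraticForm K W) (f : W) :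
    f ∈ LinearMap.ker Q.polarBilin ↔ ∀ y, polar Q f y = 0 := by
  simp [LinearMap.ext_iff]

lemma mem_ker_polarBilin_of_isotropic (Q : QuadraticForm K W) {f : W} (hQf : Q f = 0)
    (hpolar : ∀ x ∉ Submodule.span K {f}, ∀ t : K, t * (t * Q f + polar Q f x) = 0) :
    f ∈ LinearMap.ker Q.polarBilin := by
  refine (mem_ker_polarBilin_iff Q f).mpr fun y => ?_
  by_cases hy : y ∈ Submodule.span K {f}
  · obtain ⟨c, rfl⟩ := Submodule.mem_span_singleton.mp hy
    simp [polar_smul_right, polar_self, hQf]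
  · simpa [hQf] using hpolar y hy 1

lemma finrank_eq_two_of_anisotropic [FiniteDimensional K W] (Q : QuadraticForm K W) {f x₀ : W}
    (hf : f ≠ 0) (hQf : Q f ≠ 0) (hx₀ : x₀ ∉ Submodule.span K {f})
    (hpolar : ∀ x ∉ Submodule.span K {f}, ∀ t : K, t * (t * Q f + polar Q f x) = 0)
    (hker : LinearMap.ker Q.polarBilin ≤ Submodule.span K {f}) :
    finrank K W = 2 ∧ finrank K (LinearMap.ker Q.polarBilin) = 0 ∧ Cardinal.mk K = 2 := by
  have hneg : ∀ x ∉ Submodule.span K {f}, polar Q f x = -Q f := fun x hx => by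
    linear_combination hpolar x hx 1
  have hK : ∀ t : K, t = 0 ∨ t = 1 := fun t => by
    have h := hpolar x₀ hx₀ t
    rw [hneg x₀ hx₀] at h
    have h' : t * (t - 1) * Q f = 0 := by linear_combination h
    simpa [hQf, sub_eq_zero] using h'
  set g := Q.polarBilin f
  have hgf : g f = 0 :=
    polar_self_eq_zero_of_two_eq_zero Q (two_eq_zero_of_forall_eq_zero_or_eq_one hK) f
  have hgx₀ : g x₀ ≠ 0 := by simp [g, hneg x₀ hx₀, hQf]
  have hg : g ≠ 0 := fun h => hgx₀ (by simp [h])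
  have hker_g : LinearMap.ker g = Submodule.span K {f} := by
    refine le_antisymm (fun x hx => by_contra fun hxf => hQf ?_)
      (Submodule.span_singleton_le_iff_mem _ _ |>.mpr hgf)
    simpa [g, hneg x hxf] using LinearMap.mem_ker.mp hx
  refine ⟨(Dual.ker_eq_span_singleton_iff_finrank_eq_two hg hf hgf).mp hker_g, ?_,
    Cardinal.mk_eq_two_iff_forall_eq_zero_or_eq_one.mpr hK⟩
  rw [Submodule.finrank_eq_zero, eq_bot_iff]
  intro v hv
  obtain ⟨c, rfl⟩ := Submodule.mem_span_singleton.mp (hker hv)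
  rw [LinearMap.mem_ker, map_smul, smul_eq_zero] at hv
  simp [hv.resolve_right hg]

lemma polar_eq_one_of_finrank_eq_two [FiniteDimensional K W] (Q : QuadraticForm K W) {f x : W}
    (hf : f ≠ 0) (hdim : finrank K W = 2) (hrad : LinearMap.ker Q.polarBilin = ⊥)
    (hK : ∀ t : K, t = 0 ∨ t = 1) (hx : x ∉ Submodule.span K {f}) : polar Q f x = 1 := by
  set g := Q.polarBilin f
  have hg : g ≠ 0 := fun h => hf (by simpa [hrad] using LinearMap.mem_ker.mpr h)
  have hgf : g f = 0 :=
    polar_self_eq_zero_of_two_eq_zero Q (two_eq_zero_of_forall_eq_zero_or_eq_one hK) f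
  rw [← (Dual.ker_eq_span_singleton_iff_finrank_eq_two hg hf hgf).mpr hdim,
    LinearMap.mem_ker] at hx
  exact (hK (g x)).resolve_left hx

end

/-- Lemma 3.2: for a non-zero vector `f`, the group `{δ_{a*,f} : ⟨a*,f⟩ = 0}` is contained
in `O'(V,Q)` iff (i) `Q f = 0` and `V^⊥ = F·f`, or (ii) `dim V = 1`, or
(iii) `dim V = 2`, `Q f ≠ 0`, `dim V^⊥ = 0` and `|F| = 2`. -/
theorem stmt6 (Q : QuadraticForm F V) (f : V) (hf : f ≠ 0) :
    {φ : V →ₗ[F] V | ∃ a : Module.Dual F V, a f = 0 ∧ φ = deltaMap a f} ⊆ wOrthSet Q ↔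
      ((Q f = 0 ∧ LinearMap.ker Q.polarBilin = Submodule.span F {f}) ∨
        Module.finrank F V = 1 ∨
        (Module.finrank F V = 2 ∧ Q f ≠ 0 ∧
          Module.finrank F ↥(LinearMap.ker Q.polarBilin) = 0 ∧ Cardinal.mk F = 2)) := by
  have hsub : {φ | ∃ a : Dual F V, a f = 0 ∧ φ = deltaMap a f} ⊆ wOrthSet Q ↔
      ∀ a : Dual F V, a f = 0 → deltaMap a f ∈ wOrthSet Q :=
    ⟨fun h a ha => h ⟨a, ha, rfl⟩, fun h _ ⟨a, ha, hφ⟩ => hφ ▸ h a ha⟩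
  rw [hsub, forall_deltaMap_mem_wOrthSet_iff Q hf]
  constructor
  · rintro ⟨hpolar, hker⟩
    by_cases hspan : Submodule.span F {f} = ⊤
    · exact Or.inr (Or.inl (by rw [← finrank_top F V, ← hspan, finrank_span_singleton hf]))
    obtain ⟨x₀, hx₀⟩ : ∃ x₀, x₀ ∉ Submodule.span F {f} := by
      simpa [Submodule.eq_top_iff'] using hspan
    by_cases hQf : Q f = 0
    · refine Or.inl ⟨hQf, hker.antisymm ?_⟩
      exact (Submodule.span_singleton_le_iff_mem _ _).mpr
        (mem_ker_polarBilin_of_isotropic Q hQf hpolar)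
    · obtain ⟨hdim, hrad, hcard⟩ := finrank_eq_two_of_anisotropic Q hf hQf hx₀ hpolar hker
      exact Or.inr (Or.inr ⟨hdim, hQf, hrad, hcard⟩)
  · rintro (⟨hQf, hker⟩ | hdim | ⟨hdim, hQf, hrad, hcard⟩)
    · have hf_rad := (mem_ker_polarBilin_iff Q f).mp (hker ▸ Submodule.mem_span_singleton_self f)
      exact ⟨fun x _ t => by simp [hQf, hf_rad x], hker.le⟩
    · have hspan : Submodule.span F {f} = ⊤ :=
        Submodule.eq_top_of_finrank_eq (by rw [finrank_span_singleton hf, hdim])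
      simp [hspan]
    · rw [Submodule.finrank_eq_zero] at hrad
      have hK := Cardinal.mk_eq_two_iff_forall_eq_zero_or_eq_one.mp hcard
      refine ⟨fun x hx t => ?_, by simp [hrad]⟩
      rw [polar_eq_one_of_finrank_eq_two Q hf hdim hrad hK hx, (hK (Q f)).resolve_left hQf]
      rcases hK t with rfl | rfl
      · ring
      · linear_combination two_eq_zero_of_forall_eq_zero_or_eq_one hK
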